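/- arXiv:1010.2471 — 2 statements merged into one kernel-verified Lean document; each statement's English description precedes it below -/
import Mathlib

section
/- Assume that 𝒮 : M_{n×p} → ℂ^m satisfies the strong rank null space property of order k with constant η ∈ (0,1). Let X, Z ∈ M_{n×p} satisfy 𝒮(X) = 𝒮(Z). Then ‖X − Z‖_* ≤ (1+η)/(1−η) · (‖Z‖_* − ‖X‖_* + 2ρ_k(X)_*), where ρ_k(X)_* = min{‖X − Y‖_* : rank(Y) ≤ k} is the best k-rank approximation error in the nuclear norm. -/
/-!
The nuclear norm is dual to the operator norm: `Re tr (X P) ≤ ‖X‖_*` for every contraction `P`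
(`1 - Pᴴ P ⪰ 0`), with equality at `P = Xᴴ (X Xᴴ)^{-1/2}`, the adjoint of the polar factor of `X`.
This gives the triangle inequality, and `‖A‖_* + ‖B‖_* ≤ ‖A + B‖_*` when `A Bᴴ = 0` and `Aᴴ B = 0`:
then the polar certificates of `A` and `B` have orthogonal supports, so their sum is again a
contraction.

For `Y` of rank `≤ k`, split `X - Z ∈ ker 𝒮` as `H₁ + H₂` by the strong rank null space property
with `X₁ = Y`. Then `‖X - Z‖_* ≤ ‖H₁‖_* + ‖H₂‖_* ≤ (1 + η)‖H₂‖_*`, while additivity on `Y` and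
`-H₂` and the identity `Y - H₂ = Z + H₁ - (X - Y)` give
`(1 - η)‖H₂‖_* ≤ ‖Z‖_* - ‖X‖_* + 2‖X - Y‖_*`. Minimising over `Y` yields the claim.
-/

open Matrix
open scoped ComplexOrder

namespace IRLSM

/-- Frobenius inner product `⟨X,Y⟩ = Tr(X Yᴴ)`. -/
noncomputable def frobInner {n p : ℕ} (X Y : Matrix (Fin n) (Fin p) ℂ) : ℂ :=
  Matrix.trace (X * Yᴴ)

/-- Frobenius norm. -/
noncomputable def frobNorm {n p : ℕ} (X : Matrix (Fin n) (Fin p) ℂ) : ℝ :=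
  Real.sqrt (∑ i, ∑ j, Complex.normSq (X i j))

/-- Singular values of `X` in nonincreasing order, `sv X 0 = σ₁ ≥ sv X 1 = σ₂ ≥ …`;
indices `≥ n` give `0`. -/
noncomputable def sv {n p : ℕ} (X : Matrix (Fin n) (Fin p) ℂ) : ℕ → ℝ :=
  fun i => ((List.ofFn fun j : Fin n =>
      Real.sqrt ((Matrix.isHermitian_mul_conjTranspose_self X).eigenvalues j)).mergeSort
      (fun a b => decide (b ≤ a))).getD i 0

/-- Nuclear norm `‖X‖_* = ∑ σᵢ(X)`. -/
noncomputable def nuclearNorm {n p : ℕ} (X : Matrix (Fin n) (Fin p) ℂ) : ℝ :=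
  ∑ i : Fin n, sv X (i : ℕ)

/-- Positive square root of a positive semidefinite matrix (junk value `0` otherwise). -/
noncomputable def matSqrt {n : ℕ} (W : Matrix (Fin n) (Fin n) ℂ) : Matrix (Fin n) (Fin n) ℂ :=
  @dite _ W.PosSemidef (Classical.dec _) (fun h => (h.1.eigenvectorUnitary : Matrix (Fin n) (Fin n) ℂ) *
    Matrix.diagonal ((↑) ∘ Real.sqrt ∘ h.1.eigenvalues) *
    (star h.1.eigenvectorUnitary : Matrix (Fin n) (Fin n) ℂ)) (fun _ => 0)

/-- The functional `𝒥(X,W) = ½(‖W^{1/2}X‖_F² + ‖W^{-1/2}‖_F²)`. -/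
noncomputable def Jfun {n p : ℕ} (X : Matrix (Fin n) (Fin p) ℂ)
    (W : Matrix (Fin n) (Fin n) ℂ) : ℝ :=
  (frobNorm (matSqrt W * X) ^ 2 + frobNorm (matSqrt W⁻¹) ^ 2) / 2

/-- The restricted isometry constant `δ_k(𝒮)`: the smallest `δ ≥ 0` such that
`(1-δ)‖X‖_F² ≤ ‖𝒮(X)‖² ≤ (1+δ)‖X‖_F²` for all `X` of rank at most `k`. -/
noncomputable def ripConst {n p m : ℕ}
    (S : Matrix (Fin n) (Fin p) ℂ →ₗ[ℂ] (Fin m → ℂ)) (k : ℕ) : ℝ :=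
  sInf {δ : ℝ | 0 ≤ δ ∧ ∀ X : Matrix (Fin n) (Fin p) ℂ, X.rank ≤ k →
    (1 - δ) * frobNorm X ^ 2 ≤ ∑ i, Complex.normSq (S X i) ∧
      ∑ i, Complex.normSq (S X i) ≤ (1 + δ) * frobNorm X ^ 2}

/-- The rank null space property of order `k`. -/
def RNSP {n p m : ℕ} (S : Matrix (Fin n) (Fin p) ℂ →ₗ[ℂ] (Fin m → ℂ)) (k : ℕ) : Prop :=
  ∀ H : Matrix (Fin n) (Fin p) ℂ, S H = 0 → H ≠ 0 →
    ∀ H₁ H₂ : Matrix (Fin n) (Fin p) ℂ, H = H₁ + H₂ → H₁.rank ≤ k →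
      nuclearNorm H₁ < nuclearNorm H₂

/-- The strong rank null space property of order `k` with constant `η`. -/
def SRNSP {n p m : ℕ} (S : Matrix (Fin n) (Fin p) ℂ →ₗ[ℂ] (Fin m → ℂ)) (k : ℕ) (η : ℝ) : Prop :=
  ∀ X : Matrix (Fin n) (Fin p) ℂ, S X = 0 → X ≠ 0 →
    ∀ X₁ X₂ : Matrix (Fin n) (Fin p) ℂ, X = X₁ + X₂ → X₁.rank ≤ k →
      ∃ H₁ H₂ : Matrix (Fin n) (Fin p) ℂ, X = H₁ + H₂ ∧ H₁.rank ≤ 2 * k ∧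
        frobInner H₁ H₂ = 0 ∧ X₁ * H₂ᴴ = 0 ∧ X₁ᴴ * H₂ = 0 ∧
        nuclearNorm H₁ ≤ η * nuclearNorm H₂

/-- Best `k`-rank approximation error in the nuclear norm, `ρ_k(X)_*`. -/
noncomputable def rhoNuc {n p : ℕ} (k : ℕ) (X : Matrix (Fin n) (Fin p) ℂ) : ℝ :=
  sInf ((fun Z => nuclearNorm (X - Z)) '' {Z : Matrix (Fin n) (Fin p) ℂ | Z.rank ≤ k})

/-- `j^ε(u) = |u|` for `|u| ≥ ε` and `(u² + ε²)/(2ε)` otherwise. -/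
noncomputable def jeps (ε u : ℝ) : ℝ :=
  if ε ≤ |u| then |u| else (u ^ 2 + ε ^ 2) / (2 * ε)

/-- The functional `𝒥_ε(X) = ∑ᵢ j^ε(σᵢ(X))`. -/
noncomputable def Jeps {n p : ℕ} (ε : ℝ) (X : Matrix (Fin n) (Fin p) ℂ) : ℝ :=
  ∑ i : Fin n, jeps ε (sv X (i : ℕ))

/-- `(X^ℓ, W^ℓ, ε_ℓ)_ℓ` is an output of the IRLS-M algorithm with measurement map `S`,
data `M`, parameters `γ > 0` and `K`.  Here `X (ℓ+1)` is the weighted least squares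
minimizer for the weight `W ℓ`, `ε (ℓ+1) = min (ε ℓ) (γ σ_{K+1}(X^{ℓ+1}))`, and
`W (ℓ+1)` is built from an eigendecomposition of `X^{ℓ+1}(X^{ℓ+1})ᴴ` together with the
`ε`-stabilization of the singular values.  If `ε` reaches `0` the algorithm stops. -/
structure IsIRLSM {n p m : ℕ} (S : Matrix (Fin n) (Fin p) ℂ →ₗ[ℂ] (Fin m → ℂ))
    (M : Fin m → ℂ) (γ : ℝ) (K : ℕ)
    (X : ℕ → Matrix (Fin n) (Fin p) ℂ)
    (W : ℕ → Matrix (Fin n) (Fin n) ℂ)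
    (ε : ℕ → ℝ) : Prop where
  w_init : W 0 = 1
  eps_init : ε 0 = 1
  x_feasible : ∀ ℓ : ℕ, ε ℓ ≠ 0 → S (X (ℓ + 1)) = M
  x_min : ∀ ℓ : ℕ, ε ℓ ≠ 0 → ∀ Y : Matrix (Fin n) (Fin p) ℂ, S Y = M →
    frobNorm (matSqrt (W ℓ) * X (ℓ + 1)) ^ 2 ≤ frobNorm (matSqrt (W ℓ) * Y) ^ 2
  eps_update : ∀ ℓ : ℕ, ε ℓ ≠ 0 → ε (ℓ + 1) = min (ε ℓ) (γ * sv (X (ℓ + 1)) K)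
  w_update : ∀ ℓ : ℕ, ε ℓ ≠ 0 → ε (ℓ + 1) ≠ 0 →
    ∃ U : Matrix (Fin n) (Fin n) ℂ, U * Uᴴ = 1 ∧ Uᴴ * U = 1 ∧
      X (ℓ + 1) * (X (ℓ + 1))ᴴ =
        U * Matrix.diagonal (fun i : Fin n => ((sv (X (ℓ + 1)) (i : ℕ) : ℂ)) ^ 2) * Uᴴ ∧
      W (ℓ + 1) =
        U * Matrix.diagonal
            (fun i : Fin n => (((max (sv (X (ℓ + 1)) (i : ℕ)) (ε (ℓ + 1)) : ℝ) : ℂ))⁻¹) * Uᴴ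
  w_stop : ∀ ℓ : ℕ, ε ℓ ≠ 0 → ε (ℓ + 1) = 0 → W (ℓ + 1) = W ℓ
  stopped : ∀ ℓ : ℕ, ε ℓ = 0 → X (ℓ + 1) = X ℓ ∧ W (ℓ + 1) = W ℓ ∧ ε (ℓ + 1) = 0

lemma sum_fin_getD_eq_list_sum {N : ℕ} (l : List ℝ) (hl : l.length = N) :
    ∑ i : Fin N, l.getD i 0 = l.sum := by
  subst hl
  conv_rhs => rw [← List.ofFn_getElem (xs := l), List.sum_ofFn]
  exact Finset.sum_congr rfl fun i _ => List.getD_eq_getElem l 0 i.isLt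

section gram
variable {n p : ℕ}

noncomputable abbrev gramEigenvalues (X : Matrix (Fin n) (Fin p) ℂ) : Fin n → ℝ :=
  (isHermitian_mul_conjTranspose_self X).eigenvalues

/-- `f(X Xᴴ)`, computed through the eigendecomposition of `X Xᴴ`. -/
noncomputable def gramCalc (X : Matrix (Fin n) (Fin p) ℂ) (f : ℝ → ℝ) :
    Matrix (Fin n) (Fin n) ℂ :=
  Unitary.conjStarAlgAut ℂ _ (isHermitian_mul_conjTranspose_self X).eigenvectorUnitary
    (diagonal fun i => (f (gramEigenvalues X i) : ℂ))

lemma gramEigenvalues_nonneg (X : Matrix (Fin n) (Fin p) ℂ) (i : Fin n) :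
    0 ≤ gramEigenvalues X i :=
  (posSemidef_self_mul_conjTranspose X).eigenvalues_nonneg i

lemma gramCalc_id (X : Matrix (Fin n) (Fin p) ℂ) : gramCalc X id = X * Xᴴ :=
  (isHermitian_mul_conjTranspose_self X).spectral_theorem.symm

lemma gramCalc_congr (X : Matrix (Fin n) (Fin p) ℂ) {f g : ℝ → ℝ}
    (h : ∀ t, 0 ≤ t → f t = g t) : gramCalc X f = gramCalc X g := by
  simp only [gramCalc, h _ (gramEigenvalues_nonneg X _)]

lemma gramCalc_mul (X : Matrix (Fin n) (Fin p) ℂ) (f g : ℝ → ℝ) :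
    gramCalc X f * gramCalc X g = gramCalc X (f * g) := by
  simp only [gramCalc, ← map_mul, diagonal_mul_diagonal, Pi.mul_apply, Complex.ofReal_mul]

lemma gramCalc_mul_comm (X : Matrix (Fin n) (Fin p) ℂ) (f g : ℝ → ℝ) :
    gramCalc X f * gramCalc X g = gramCalc X g * gramCalc X f := by
  rw [gramCalc_mul, gramCalc_mul, mul_comm]

lemma conjTranspose_gramCalc (X : Matrix (Fin n) (Fin p) ℂ) (f : ℝ → ℝ) :
    (gramCalc X f)ᴴ = gramCalc X f := by
  rw [← star_eq_conjTranspose, gramCalc, ← map_star, star_eq_conjTranspose,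
    diagonal_conjTranspose]
  simp [Pi.star_def, Complex.conj_ofReal]

lemma trace_gramCalc (X : Matrix (Fin n) (Fin p) ℂ) (f : ℝ → ℝ) :
    trace (gramCalc X f) = ∑ i, (f (gramEigenvalues X i) : ℂ) := by
  rw [gramCalc, Unitary.conjStarAlgAut_apply, trace_mul_cycle, Unitary.coe_star_mul_self,
    one_mul, trace_diagonal]

lemma nuclearNorm_eq_sum_sqrt_gramEigenvalues (X : Matrix (Fin n) (Fin p) ℂ) :
    nuclearNorm X = ∑ i, √(gramEigenvalues X i) := by
  unfold nuclearNorm sv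
  rw [sum_fin_getD_eq_list_sum _ (by simp), (List.mergeSort_perm _ _).sum_eq, List.sum_ofFn]

lemma nuclearNorm_nonneg (X : Matrix (Fin n) (Fin p) ℂ) : 0 ≤ nuclearNorm X := by
  rw [nuclearNorm_eq_sum_sqrt_gramEigenvalues]
  positivity

lemma nuclearNorm_zero : nuclearNorm (0 : Matrix (Fin n) (Fin p) ℂ) = 0 := by
  have h0 : gramEigenvalues (0 : Matrix (Fin n) (Fin p) ℂ) = 0 :=
    (isHermitian_mul_conjTranspose_self _).eigenvalues_eq_zero_iff.mpr (by simp)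
  simp [nuclearNorm_eq_sum_sqrt_gramEigenvalues, h0]

lemma gramEigenvalues_eq_of_gram_eq {X Y : Matrix (Fin n) (Fin p) ℂ} (h : X * Xᴴ = Y * Yᴴ) :
    gramEigenvalues X = gramEigenvalues Y := by
  have eigenvalues_congr : ∀ {A B : Matrix (Fin n) (Fin n) ℂ} (hA : A.IsHermitian)
      (hB : B.IsHermitian), A = B → hA.eigenvalues = hB.eigenvalues := by
    rintro _ _ _ _ rfl
    rfl
  exact eigenvalues_congr _ _ h

lemma nuclearNorm_neg (X : Matrix (Fin n) (Fin p) ℂ) : nuclearNorm (-X) = nuclearNorm X := by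
  simp only [nuclearNorm_eq_sum_sqrt_gramEigenvalues,
    gramEigenvalues_eq_of_gram_eq (X := -X) (Y := X) (by simp)]

/-- The adjoint `Xᴴ (X Xᴴ)^{-1/2}` of the partial isometry in the polar decomposition of `X`;
the inverse square root is taken with `0⁻¹ = 0`, i.e. on the range of `X Xᴴ` only. -/
noncomputable def polarDual (X : Matrix (Fin n) (Fin p) ℂ) : Matrix (Fin p) (Fin n) ℂ :=
  Xᴴ * gramCalc X (fun t => (√t)⁻¹)

lemma mul_polarDual (X : Matrix (Fin n) (Fin p) ℂ) : X * polarDual X = gramCalc X (√·) := by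
  rw [polarDual, ← Matrix.mul_assoc, ← gramCalc_id, gramCalc_mul]
  refine gramCalc_congr X fun t ht => ?_
  simp only [Pi.mul_apply, id]
  rcases ht.eq_or_lt with rfl | ht
  · simp
  · rw [← Real.mul_self_sqrt ht.le, Real.sqrt_mul_self (Real.sqrt_nonneg _)]
    exact mul_inv_cancel_right₀ (Real.sqrt_pos.mpr ht).ne' _

lemma re_trace_mul_polarDual (X : Matrix (Fin n) (Fin p) ℂ) :
    (trace (X * polarDual X)).re = nuclearNorm X := by
  rw [mul_polarDual, trace_gramCalc, nuclearNorm_eq_sum_sqrt_gramEigenvalues,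
    ← Complex.ofReal_sum, Complex.ofReal_re]

lemma polarDual_gram (X : Matrix (Fin n) (Fin p) ℂ) :
    (polarDual X)ᴴ * polarDual X = gramCalc X (fun t => t * t⁻¹) := by
  rw [polarDual, conjTranspose_mul, conjTranspose_conjTranspose, conjTranspose_gramCalc,
    Matrix.mul_assoc, ← Matrix.mul_assoc X, ← gramCalc_id, gramCalc_mul, gramCalc_mul]
  refine gramCalc_congr X fun t ht => ?_
  simp only [Pi.mul_apply, id]
  rw [mul_comm, mul_assoc, ← mul_inv, Real.mul_self_sqrt ht]

lemma polarDual_gram_eq_inv_mul (X : Matrix (Fin n) (Fin p) ℂ) :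
    (polarDual X)ᴴ * polarDual X = gramCalc X (·⁻¹) * (X * Xᴴ) := by
  rw [polarDual_gram, ← gramCalc_id, gramCalc_mul, mul_comm]
  rfl

lemma polarDual_gram_mul_eq_zero {q : ℕ} (X : Matrix (Fin n) (Fin p) ℂ)
    {M : Matrix (Fin n) (Fin q) ℂ} (h : X * Xᴴ * M = 0) :
    (polarDual X)ᴴ * polarDual X * M = 0 := by
  rw [polarDual_gram_eq_inv_mul, Matrix.mul_assoc, h, Matrix.mul_zero]

lemma mul_polarDual_gram_eq_zero {q : ℕ} (X : Matrix (Fin n) (Fin p) ℂ)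
    {M : Matrix (Fin q) (Fin n) ℂ} (h : M * (X * Xᴴ) = 0) :
    M * ((polarDual X)ᴴ * polarDual X) = 0 := by
  rw [polarDual_gram_eq_inv_mul, ← gramCalc_id, gramCalc_mul_comm, gramCalc_id,
    ← Matrix.mul_assoc, h, Matrix.zero_mul]

lemma polarDual_gram_idempotent (X : Matrix (Fin n) (Fin p) ℂ) :
    (polarDual X)ᴴ * polarDual X * ((polarDual X)ᴴ * polarDual X) =
      (polarDual X)ᴴ * polarDual X := by
  rw [polarDual_gram, gramCalc_mul]
  congr 1
  funext t
  by_cases ht : t = 0 <;> simp [ht]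

end gram

section contraction
variable {l m : Type*}

lemma posSemidef_one_sub_of_idempotent [Fintype m] [DecidableEq m] {Q : Matrix m m ℂ}
    (hQ : Q.IsHermitian) (h : Q * Q = Q) : (1 - Q).PosSemidef := by
  have hsq : 1 - Q = (1 - Q) * (1 - Q)ᴴ := by
    rw [conjTranspose_sub, conjTranspose_one, hQ.eq, Matrix.sub_mul, Matrix.mul_sub,
      Matrix.mul_sub, h]
    simp
  rw [hsq]
  exact posSemidef_self_mul_conjTranspose _

lemma sum_norm_sq_le_one_of_posSemidef_one_sub [Fintype m] [DecidableEq l] {P : Matrix m l ℂ}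
    (hP : (1 - Pᴴ * P).PosSemidef) (i : l) : ∑ j, ‖P j i‖ ^ 2 ≤ 1 := by
  have hdiag := hP.diag_nonneg (i := i)
  have hentry : (1 - Pᴴ * P : Matrix l l ℂ) i i = ((1 - ∑ j, ‖P j i‖ ^ 2 : ℝ) : ℂ) := by
    simp [mul_apply, Complex.conj_mul']
  rw [hentry, Complex.zero_le_real] at hdiag
  linarith

lemma re_mul_apply_self_le [Fintype l] (A : Matrix m l ℂ) (B : Matrix l m ℂ) (i : m) :
    ((A * B) i i).re ≤ √(∑ j, ‖A i j‖ ^ 2) * √(∑ j, ‖B j i‖ ^ 2) :=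
  calc ((A * B) i i).re ≤ ‖(A * B) i i‖ := Complex.re_le_norm _
    _ ≤ ∑ j, ‖A i j‖ * ‖B j i‖ := by
      rw [mul_apply]
      exact (norm_sum_le _ _).trans_eq (by simp_rw [norm_mul])
    _ ≤ √(∑ j, ‖A i j‖ ^ 2) * √(∑ j, ‖B j i‖ ^ 2) := Real.sum_mul_le_sqrt_mul_sqrt _ _ _

end contraction

section duality
variable {n p : ℕ}

lemma sum_norm_sq_star_eigenvectorUnitary_mul (X : Matrix (Fin n) (Fin p) ℂ) (i : Fin n) :
    ∑ j, ‖(star ((isHermitian_mul_conjTranspose_self X).eigenvectorUnitary :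
      Matrix (Fin n) (Fin n) ℂ) * X) i j‖ ^ 2 = gramEigenvalues X i := by
  set U : Matrix (Fin n) (Fin n) ℂ := ((isHermitian_mul_conjTranspose_self X).eigenvectorUnitary :
    Matrix (Fin n) (Fin n) ℂ)
  have hdiag : (star U * X) * (star U * X)ᴴ = diagonal fun i => (gramEigenvalues X i : ℂ) := by
    have := (isHermitian_mul_conjTranspose_self X).conjStarAlgAut_star_eigenvectorUnitary
    simp only [Unitary.conjStarAlgAut_star_apply] at this
    rw [conjTranspose_mul, star_eq_conjTranspose, conjTranspose_conjTranspose]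
    convert this using 1
    · simp only [star_eq_conjTranspose, Matrix.mul_assoc, U]
    · rfl
  have hii := congrFun (congrFun hdiag i) i
  simp only [mul_apply, conjTranspose_apply, diagonal_apply_eq, Complex.star_def,
    Complex.mul_conj'] at hii
  exact_mod_cast hii

lemma re_trace_mul_le_nuclearNorm (X : Matrix (Fin n) (Fin p) ℂ) {P : Matrix (Fin p) (Fin n) ℂ}
    (hP : (1 - Pᴴ * P).PosSemidef) : (trace (X * P)).re ≤ nuclearNorm X := by
  set U : Matrix (Fin n) (Fin n) ℂ := ((isHermitian_mul_conjTranspose_self X).eigenvectorUnitary :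
    Matrix (Fin n) (Fin n) ℂ)
  have hPU : (1 - (P * U)ᴴ * (P * U)).PosSemidef := by
    have := hP.conjTranspose_mul_mul_same U
    rw [Matrix.mul_sub, Matrix.sub_mul, Matrix.mul_one, ← star_eq_conjTranspose,
      Unitary.coe_star_mul_self] at this
    convert this using 2
    simp only [conjTranspose_mul, star_eq_conjTranspose, Matrix.mul_assoc]
  have htrace : trace (X * P) = trace ((star U * X) * (P * U)) := by
    symm
    rw [Matrix.mul_assoc, trace_mul_comm, Matrix.mul_assoc, Matrix.mul_assoc,
      Unitary.mul_star_self_of_mem (Subtype.prop _), Matrix.mul_one]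
  rw [htrace, trace, Complex.re_sum, nuclearNorm_eq_sum_sqrt_gramEigenvalues]
  refine Finset.sum_le_sum fun i _ => (re_mul_apply_self_le _ _ i).trans ?_
  rw [sum_norm_sq_star_eigenvectorUnitary_mul]
  exact mul_le_of_le_one_right (Real.sqrt_nonneg _)
    (Real.sqrt_le_one.mpr (sum_norm_sq_le_one_of_posSemidef_one_sub hPU i))

lemma posSemidef_one_sub_polarDual_gram (X : Matrix (Fin n) (Fin p) ℂ) :
    (1 - (polarDual X)ᴴ * polarDual X).PosSemidef :=
  posSemidef_one_sub_of_idempotent (isHermitian_conjTranspose_mul_self _)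
    (polarDual_gram_idempotent X)

lemma nuclearNorm_add_le (A B : Matrix (Fin n) (Fin p) ℂ) :
    nuclearNorm (A + B) ≤ nuclearNorm A + nuclearNorm B := by
  have hP := posSemidef_one_sub_polarDual_gram (A + B)
  calc nuclearNorm (A + B) = (trace ((A + B) * polarDual (A + B))).re :=
        (re_trace_mul_polarDual _).symm
    _ = (trace (A * polarDual (A + B))).re + (trace (B * polarDual (A + B))).re := by
        rw [Matrix.add_mul, trace_add, Complex.add_re]
    _ ≤ nuclearNorm A + nuclearNorm B :=
        add_le_add (re_trace_mul_le_nuclearNorm A hP) (re_trace_mul_le_nuclearNorm B hP)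

section orthogonal
variable {A B : Matrix (Fin n) (Fin p) ℂ}

lemma mul_polarDual_eq_zero (h : A * Bᴴ = 0) : A * polarDual B = 0 := by
  rw [polarDual, ← Matrix.mul_assoc, h, Matrix.zero_mul]

lemma conjTranspose_polarDual_mul_polarDual_eq_zero (h : A * Bᴴ = 0) :
    (polarDual A)ᴴ * polarDual B = 0 := by
  rw [polarDual, conjTranspose_mul, conjTranspose_conjTranspose, conjTranspose_gramCalc,
    Matrix.mul_assoc, mul_polarDual_eq_zero h, Matrix.mul_zero]

lemma polarDual_gram_mul_polarDual_gram_eq_zero (h : Aᴴ * B = 0) :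
    (polarDual A)ᴴ * polarDual A * ((polarDual B)ᴴ * polarDual B) = 0 := by
  have hAB : (polarDual A)ᴴ * polarDual A * B = 0 :=
    polarDual_gram_mul_eq_zero A (by rw [Matrix.mul_assoc, h, Matrix.mul_zero])
  exact mul_polarDual_gram_eq_zero B (by rw [← Matrix.mul_assoc, hAB, Matrix.zero_mul])

lemma nuclearNorm_add_nuclearNorm_le (h₁ : A * Bᴴ = 0) (h₂ : Aᴴ * B = 0) :
    nuclearNorm A + nuclearNorm B ≤ nuclearNorm (A + B) := by
  have h₁' : B * Aᴴ = 0 := by simpa using congrArg conjTranspose h₁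
  have h₂' : Bᴴ * A = 0 := by simpa using congrArg conjTranspose h₂
  set QA := (polarDual A)ᴴ * polarDual A
  set QB := (polarDual B)ᴴ * polarDual B
  have hgram : (polarDual A + polarDual B)ᴴ * (polarDual A + polarDual B) = QA + QB := by
    rw [conjTranspose_add, Matrix.add_mul, Matrix.mul_add, Matrix.mul_add,
      conjTranspose_polarDual_mul_polarDual_eq_zero h₁,
      conjTranspose_polarDual_mul_polarDual_eq_zero h₁']
    abel
  have hidem : (QA + QB) * (QA + QB) = QA + QB := by
    rw [Matrix.add_mul, Matrix.mul_add, Matrix.mul_add, polarDual_gram_idempotent,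
      polarDual_gram_idempotent, polarDual_gram_mul_polarDual_gram_eq_zero h₂,
      polarDual_gram_mul_polarDual_gram_eq_zero h₂']
    abel
  have hP : (1 - (polarDual A + polarDual B)ᴴ * (polarDual A + polarDual B)).PosSemidef := by
    refine posSemidef_one_sub_of_idempotent (isHermitian_conjTranspose_mul_self _) ?_
    rw [hgram, hidem]
  calc nuclearNorm A + nuclearNorm B
      = (trace ((A + B) * (polarDual A + polarDual B))).re := by
        rw [Matrix.add_mul, Matrix.mul_add, Matrix.mul_add, mul_polarDual_eq_zero h₁,
          mul_polarDual_eq_zero h₁', add_zero, zero_add, trace_add, Complex.add_re,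
          re_trace_mul_polarDual, re_trace_mul_polarDual]
    _ ≤ nuclearNorm (A + B) := re_trace_mul_le_nuclearNorm _ hP

end orthogonal

end duality

lemma le_rhoNuc {n p k : ℕ} {X : Matrix (Fin n) (Fin p) ℂ} {a : ℝ}
    (h : ∀ Y : Matrix (Fin n) (Fin p) ℂ, Y.rank ≤ k → a ≤ nuclearNorm (X - Y)) :
    a ≤ rhoNuc k X :=
  le_csInf ⟨_, 0, by simp, rfl⟩ fun _ ⟨Y, hY, hYa⟩ => hYa ▸ h Y hY

lemma SRNSP.one_sub_mul_nuclearNorm_sub_le {n p m k : ℕ}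
    {S : Matrix (Fin n) (Fin p) ℂ →ₗ[ℂ] (Fin m → ℂ)} {η : ℝ} (hS : SRNSP S k η)
    (hη₀ : 0 ≤ η) (hη₁ : η ≤ 1) {X Y Z : Matrix (Fin n) (Fin p) ℂ} (h : S X = S Z)
    (hY : Y.rank ≤ k) :
    (1 - η) * nuclearNorm (X - Z) ≤
      (1 + η) * (nuclearNorm Z - nuclearNorm X + 2 * nuclearNorm (X - Y)) := by
  by_cases hXZ : X - Z = 0
  · rw [hXZ, nuclearNorm_zero, mul_zero, sub_eq_zero.mp hXZ, sub_self, zero_add]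
    exact mul_nonneg (by linarith) (mul_nonneg zero_le_two (nuclearNorm_nonneg _))
  obtain ⟨H₁, H₂, hH, -, -, horth₁, horth₂, hH₁⟩ :=
    hS (X - Z) (by rw [map_sub, h, sub_self]) hXZ Y (X - Z - Y) (by abel) hY
  have hsplit : nuclearNorm (X - Z) ≤ (1 + η) * nuclearNorm H₂ := by
    have := nuclearNorm_add_le H₁ H₂
    rw [← hH] at this
    linarith
  have hY_add_H₂_le : nuclearNorm Y + nuclearNorm H₂ ≤ nuclearNorm (Y - H₂) := by
    simpa [nuclearNorm_neg, sub_eq_add_neg] using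
      nuclearNorm_add_nuclearNorm_le (A := Y) (B := -H₂) (by simp [horth₁]) (by simp [horth₂])
  have hY_sub_H₂_le :
      nuclearNorm (Y - H₂) ≤ nuclearNorm Z + nuclearNorm H₁ + nuclearNorm (X - Y) := by
    have e : Y - H₂ = Z + H₁ + -(X - Y) := by
      rw [show H₂ = X - Z - H₁ by rw [hH]; abel]
      abel
    have := nuclearNorm_add_le (Z + H₁) (-(X - Y))
    rw [← e, nuclearNorm_neg] at this
    linarith [nuclearNorm_add_le Z H₁]
  have hX : nuclearNorm X ≤ nuclearNorm (X - Y) + nuclearNorm Y := by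
    simpa using nuclearNorm_add_le (X - Y) Y
  have hH₂ :
      (1 - η) * nuclearNorm H₂ ≤ nuclearNorm Z - nuclearNorm X + 2 * nuclearNorm (X - Y) := by
    linarith
  nlinarith [nuclearNorm_nonneg H₂]

theorem statement10_general {n p m : ℕ}
    (S : Matrix (Fin n) (Fin p) ℂ →ₗ[ℂ] (Fin m → ℂ)) (k : ℕ) (η : ℝ) (hη0 : 0 < η) (hη1 : η < 1)
    (hS : SRNSP S k η)
    (X Z : Matrix (Fin n) (Fin p) ℂ) (h : S X = S Z) :
    nuclearNorm (X - Z) ≤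
      (1 + η) / (1 - η) * (nuclearNorm Z - nuclearNorm X + 2 * rhoNuc k X) := by
  have h1p : 0 < 1 + η := by linarith
  have h1m : 0 < 1 - η := by linarith
  have hρ : ((1 - η) * nuclearNorm (X - Z) / (1 + η) - nuclearNorm Z + nuclearNorm X) / 2
      ≤ rhoNuc k X := le_rhoNuc fun Y hY => by
    have := hS.one_sub_mul_nuclearNorm_sub_le hη0.le hη1.le h hY
    rw [div_le_iff₀ two_pos, sub_add, sub_le_iff_le_add, div_le_iff₀ h1p]
    linarith
  rw [div_mul_eq_mul_div, le_div_iff₀ h1m]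
  rw [div_le_iff₀ two_pos, sub_add, sub_le_iff_le_add, div_le_iff₀ h1p] at hρ
  linarith

/-- inverse triangle inequality under the strong rank null space property. -/
theorem statement10 {n p m : ℕ} (hnp : n ≤ p)
    (S : Matrix (Fin n) (Fin p) ℂ →ₗ[ℂ] (Fin m → ℂ)) (k : ℕ) (η : ℝ) (hη0 : 0 < η) (hη1 : η < 1)
    (hS : SRNSP S k η)
    (X Z : Matrix (Fin n) (Fin p) ℂ) (h : S X = S Z) :
    nuclearNorm (X - Z) ≤
      (1 + η) / (1 - η) * (nuclearNorm Z - nuclearNorm X + 2 * rhoNuc k X) :=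
  statement10_general S k η hη0 hη1 hS X Z h

end IRLSM
end

section
/- Let 𝒮 : M_{n×p} → ℂ^m be a linear map with restricted isometry constant δ_k(𝒮) > 0. Then for any two matrices X, Y ∈ M_{n×p} with rank(X) + rank(Y) ≤ k and ⟨X,Y⟩ = 0 (Frobenius inner product), one has |⟨𝒮(X), 𝒮(Y)⟩| ≤ δ_k(𝒮)·‖X‖_F·‖Y‖_F. -/
open Matrix
open scoped ComplexOrder

/-!
If `x ⟂ y` have the same norm `r`, then `x + y` and `x - y` both have norm `√2 r`, so the two-sided
RIP bounds on `x ± y` combined with the polarization identity give `4 Re ⟪Sx, Sy⟫ ≤ 4 δ r²`.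
Rescaling reduces to equal norms, and multiplying `x` by a suitable phase turns the bound on the
real part into one on the modulus.
-/

open scoped InnerProductSpace

section RestrictedIsometry

variable {𝕜 E F : Type*} [RCLike 𝕜] [NormedAddCommGroup E] [InnerProductSpace 𝕜 E]
  [NormedAddCommGroup F] [InnerProductSpace 𝕜 F]
  (f : E →ₗ[𝕜] F) (V : Submodule 𝕜 E) {δ : ℝ}

theorem re_inner_map_le_of_inner_eq_zero
    (hf : ∀ z ∈ V, (1 - δ) * ‖z‖ ^ 2 ≤ ‖f z‖ ^ 2 ∧ ‖f z‖ ^ 2 ≤ (1 + δ) * ‖z‖ ^ 2)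
    {x y : E} (hx : x ∈ V) (hy : y ∈ V)
    (hxy : ⟪x, y⟫_𝕜 = 0) : RCLike.re ⟪f x, f y⟫_𝕜 ≤ δ * (‖x‖ * ‖y‖) := by
  rcases (mul_nonneg (norm_nonneg x) (norm_nonneg y)).eq_or_lt with hzero | hpos
  · rcases mul_eq_zero.mp hzero.symm with h | h <;> simp [norm_eq_zero.mp h]
  set a := ‖x‖
  set b := ‖y‖
  set u : E := (b : 𝕜) • x
  set v : E := (a : 𝕜) • y
  have hu : ‖u‖ = a * b := by simp [u, norm_smul, mul_comm, a, b]
  have hv : ‖v‖ = a * b := by simp [v, norm_smul, a, b]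
  have huv : RCLike.re ⟪u, v⟫_𝕜 = 0 := by simp [u, v, inner_smul_left, inner_smul_right, hxy]
  have hre : RCLike.re ⟪f u, f v⟫_𝕜 = a * b * RCLike.re ⟪f x, f y⟫_𝕜 := by
    simp [u, v, inner_smul_left, inner_smul_right]
    ring
  have hadd : ‖u + v‖ ^ 2 = 2 * (a * b) ^ 2 := by
    rw [sq, @norm_add_mul_self 𝕜, huv, hu, hv]; ring
  have hsub : ‖u - v‖ ^ 2 = 2 * (a * b) ^ 2 := by
    rw [sq, @norm_sub_mul_self 𝕜, huv, hu, hv]; ring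
  have hupper := (hf (u + v) (V.add_mem (V.smul_mem _ hx) (V.smul_mem _ hy))).2
  have hlower := (hf (u - v) (V.sub_mem (V.smul_mem _ hx) (V.smul_mem _ hy))).1
  have hpol := re_inner_eq_norm_add_mul_self_sub_norm_sub_mul_self_div_four (𝕜 := 𝕜) (f u) (f v)
  rw [← map_add, ← map_sub, ← sq, ← sq] at hpol
  rw [hadd] at hupper
  rw [hsub] at hlower
  have : a * b * RCLike.re ⟪f x, f y⟫_𝕜 ≤ a * b * (δ * (a * b)) := by nlinarith
  exact le_of_mul_le_mul_left this hpos

theorem norm_inner_map_le_of_inner_eq_zero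
    (hf : ∀ z ∈ V, (1 - δ) * ‖z‖ ^ 2 ≤ ‖f z‖ ^ 2 ∧ ‖f z‖ ^ 2 ≤ (1 + δ) * ‖z‖ ^ 2)
    (hδ : 0 ≤ δ) {x y : E} (hx : x ∈ V) (hy : y ∈ V)
    (hxy : ⟪x, y⟫_𝕜 = 0) : ‖⟪f x, f y⟫_𝕜‖ ≤ δ * (‖x‖ * ‖y‖) := by
  set T := ⟪f x, f y⟫_𝕜
  have h := re_inner_map_le_of_inner_eq_zero f V hf (V.smul_mem T hx) hy
    (by simp [inner_smul_left, hxy])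
  rw [map_smul, inner_smul_left, RCLike.conj_mul, ← RCLike.ofReal_pow, RCLike.ofReal_re,
    norm_smul] at h
  have : 0 ≤ δ * (‖x‖ * ‖y‖) := by positivity
  nlinarith [norm_nonneg T]

end RestrictedIsometry

namespace Matrix

theorem rank_add_le {K m n : Type*} [Field K] [Fintype n] (A B : Matrix m n K) :
    (A + B).rank ≤ A.rank + B.rank := by
  have hrange : LinearMap.range (A + B).mulVecLin ≤
      LinearMap.range A.mulVecLin ⊔ LinearMap.range B.mulVecLin := by
    rintro _ ⟨v, rfl⟩
    rw [mulVecLin_add, LinearMap.add_apply]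
    exact Submodule.add_mem_sup ⟨v, rfl⟩ ⟨v, rfl⟩
  exact (Submodule.finrank_mono hrange).trans (Submodule.finrank_add_le_finrank_add_finrank _ _)

theorem rank_smul_le {R m n : Type*} [CommRing R] [StrongRankCondition R] [Fintype m]
    [Fintype n] (c : R) (A : Matrix m n R) : (c • A).rank ≤ A.rank := by
  classical
  rw [smul_eq_diagonal_mul]
  exact rank_mul_le_right _ _

/-- The identification of `Matrix m n 𝕜` with `EuclideanSpace 𝕜 (m × n)`, which carries the
Frobenius norm and inner product. -/
def toEuclideanSpace (𝕜 m n : Type*) [RCLike 𝕜] : Matrix m n 𝕜 ≃ₗ[𝕜] EuclideanSpace 𝕜 (m × n) where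
  toFun X := WithLp.toLp 2 fun ij => X ij.1 ij.2
  invFun v := of fun i j => v (i, j)
  map_add' _ _ := rfl
  map_smul' _ _ := rfl
  left_inv _ := rfl
  right_inv _ := rfl

@[simp]
theorem toEuclideanSpace_apply {𝕜 m n : Type*} [RCLike 𝕜] (X : Matrix m n 𝕜) (ij : m × n) :
    toEuclideanSpace 𝕜 m n X ij = X ij.1 ij.2 :=
  rfl

end Matrix

namespace IRLSM

theorem norm_toEuclideanSpace {n p : ℕ} (X : Matrix (Fin n) (Fin p) ℂ) :
    ‖toEuclideanSpace ℂ (Fin n) (Fin p) X‖ = frobNorm X := by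
  simp [EuclideanSpace.norm_eq, frobNorm, Fintype.sum_prod_type, Complex.normSq_eq_norm_sq]

theorem inner_toEuclideanSpace {n p : ℕ} (X Y : Matrix (Fin n) (Fin p) ℂ) :
    ⟪toEuclideanSpace ℂ (Fin n) (Fin p) X, toEuclideanSpace ℂ (Fin n) (Fin p) Y⟫_ℂ =
      frobInner Y X := by
  simp [frobInner, PiLp.inner_apply, Fintype.sum_prod_type, trace, mul_apply]

theorem norm_toLp_sq {m : ℕ} (v : Fin m → ℂ) :
    ‖WithLp.toLp 2 v‖ ^ 2 = ∑ i, Complex.normSq (v i) := by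
  simp [EuclideanSpace.norm_sq_eq, Complex.normSq_eq_norm_sq]

theorem inner_toLp {m : ℕ} (v w : Fin m → ℂ) :
    ⟪WithLp.toLp 2 v, WithLp.toLp 2 w⟫_ℂ = ∑ i, w i * starRingEnd ℂ (v i) := by
  simp [PiLp.inner_apply]

variable {n p m : ℕ}

def HasRIP (S : Matrix (Fin n) (Fin p) ℂ →ₗ[ℂ] (Fin m → ℂ)) (k : ℕ) (δ : ℝ) : Prop :=
  ∀ X : Matrix (Fin n) (Fin p) ℂ, X.rank ≤ k →
    (1 - δ) * frobNorm X ^ 2 ≤ ∑ i, Complex.normSq (S X i) ∧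
      ∑ i, Complex.normSq (S X i) ≤ (1 + δ) * frobNorm X ^ 2

-- The defining constraints are closed in `δ`, so the infimum is attained once it is not the
-- junk value `sInf ∅ = 0`.
theorem hasRIP_ripConst {S : Matrix (Fin n) (Fin p) ℂ →ₗ[ℂ] (Fin m → ℂ)} {k : ℕ}
    (h : 0 < ripConst S k) : HasRIP S k (ripConst S k) := by
  have hclosed : IsClosed {δ : ℝ | 0 ≤ δ ∧ HasRIP S k δ} := by
    simp only [HasRIP, Set.ofPred_and, Set.ofPred_forall]
    exact isClosed_Ici.inter <| isClosed_iInter fun X => isClosed_iInter fun _ =>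
      (isClosed_le (by fun_prop) continuous_const).inter
        (isClosed_le continuous_const (by fun_prop))
  have hne : {δ : ℝ | 0 ≤ δ ∧ HasRIP S k δ}.Nonempty := by
    by_contra hempty
    rw [Set.not_nonempty_iff_eq_empty] at hempty
    have hsInf : ripConst S k = sInf {δ : ℝ | 0 ≤ δ ∧ HasRIP S k δ} := rfl
    rw [hsInf, hempty, Real.sInf_empty] at h
    exact h.false
  exact (hclosed.csInf_mem hne ⟨0, fun _ hδ => hδ.1⟩).2

theorem norm_sum_mul_conj_le_of_hasRIP {S : Matrix (Fin n) (Fin p) ℂ →ₗ[ℂ] (Fin m → ℂ)} {k : ℕ}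
    {δ : ℝ} (hS : HasRIP S k δ) (hδ : 0 ≤ δ) {X Y : Matrix (Fin n) (Fin p) ℂ}
    (hrank : X.rank + Y.rank ≤ k) (horth : frobInner X Y = 0) :
    ‖∑ i, S X i * starRingEnd ℂ (S Y i)‖ ≤ δ * (frobNorm X * frobNorm Y) := by
  set e := toEuclideanSpace ℂ (Fin n) (Fin p)
  set f : EuclideanSpace ℂ (Fin n × Fin p) →ₗ[ℂ] EuclideanSpace ℂ (Fin m) :=
    (WithLp.linearEquiv 2 ℂ (Fin m → ℂ)).symm.toLinearMap ∘ₗ S ∘ₗ e.symm.toLinearMap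
  have hfe : ∀ Z, f (e Z) = WithLp.toLp 2 (S Z) := by simp [f]
  have hf : ∀ z ∈ Submodule.span ℂ {e Y, e X},
      (1 - δ) * ‖z‖ ^ 2 ≤ ‖f z‖ ^ 2 ∧ ‖f z‖ ^ 2 ≤ (1 + δ) * ‖z‖ ^ 2 := by
    intro z hz
    obtain ⟨s, t, rfl⟩ := Submodule.mem_span_pair.mp hz
    have hrank' : (s • Y + t • X).rank ≤ k := calc
      (s • Y + t • X).rank ≤ (s • Y).rank + (t • X).rank := rank_add_le _ _
      _ ≤ Y.rank + X.rank := add_le_add (rank_smul_le _ _) (rank_smul_le _ _)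
      _ ≤ k := by omega
    rw [← map_smul, ← map_smul, ← map_add, hfe, norm_toLp_sq, norm_toEuclideanSpace]
    exact hS _ hrank'
  have key := norm_inner_map_le_of_inner_eq_zero f _ hf hδ
    (Submodule.subset_span (Set.mem_insert _ _))
    (Submodule.subset_span (Set.mem_insert_of_mem _ rfl))
    (by rw [inner_toEuclideanSpace, horth])
  rwa [hfe, hfe, inner_toLp, norm_toEuclideanSpace, norm_toEuclideanSpace, mul_comm (frobNorm Y)]
    at key

theorem statement13_general {n p m : ℕ}
    (S : Matrix (Fin n) (Fin p) ℂ →ₗ[ℂ] (Fin m → ℂ)) (k : ℕ) (hδ : 0 < ripConst S k)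
    (X Y : Matrix (Fin n) (Fin p) ℂ)
    (hrank : X.rank + Y.rank ≤ k) (horth : frobInner X Y = 0) :
    ‖∑ i, S X i * (starRingEnd ℂ) (S Y i)‖ ≤
      ripConst S k * (frobNorm X * frobNorm Y) :=
  norm_sum_mul_conj_le_of_hasRIP (hasRIP_ripConst hδ) hδ.le hrank horth

/-- near-orthogonality of images of orthogonal low-rank matrices under RIP. -/
theorem statement13 {n p m : ℕ} (hnp : n ≤ p)
    (S : Matrix (Fin n) (Fin p) ℂ →ₗ[ℂ] (Fin m → ℂ)) (k : ℕ) (hδ : 0 < ripConst S k)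
    (X Y : Matrix (Fin n) (Fin p) ℂ)
    (hrank : X.rank + Y.rank ≤ k) (horth : frobInner X Y = 0) :
    ‖∑ i, S X i * (starRingEnd ℂ) (S Y i)‖ ≤
      ripConst S k * (frobNorm X * frobNorm Y) :=
  statement13_general S k hδ X Y hrank horth

end IRLSM
end
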